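/- Let m ≥ 5 and let c_{i,j} ∈ {0,1} for 1 ≤ i < j ≤ m be arbitrary. Let P = {(n/2^m, ν(n)) : n = 0,1,…,2^m−1}, where ν(n) = Σ_{i=1}^m ((e_i + c_{i,i+1}e_{i+1} + ⋯ + c_{i,m}e_m) mod 2)/2^i. Then disp(P) ≥ (5/2)·(1/2^m); concretely, there is an axis-parallel box of area at least (5/2)·(1/2^m) inside [0,1]² containing no point of P. -/
import Mathlib


/-- The set of areas of axis-parallel half-open boxes `[x1,y1) x [x2,y2)` inside `[0,1]^2`
containing no point of `P`. -/
def emptyBoxAreas (P : Set (ℝ × ℝ)) : Set ℝ :=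
  { A | ∃ x₁ y₁ x₂ y₂ : ℝ,
      0 ≤ x₁ ∧ x₁ ≤ y₁ ∧ y₁ ≤ 1 ∧ 0 ≤ x₂ ∧ x₂ ≤ y₂ ∧ y₂ ≤ 1 ∧
      (∀ p ∈ P, p ∉ Set.Ico x₁ y₁ ×ˢ Set.Ico x₂ y₂) ∧
      A = (y₁ - x₁) * (y₂ - x₂) }

/-- The dispersion of a point set `P ⊆ [0,1]^2`: the supremum of areas of empty
axis-parallel boxes. -/
noncomputable def disp (P : Set (ℝ × ℝ)) : ℝ := sSup (emptyBoxAreas P)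
/-- The `i`-th digit (1-based) of `n` in base `b`, with the convention that the
`0`-th digit is `0`. -/
def nthDigit (b n i : ℕ) : ℕ := if i = 0 then 0 else n / b ^ (i - 1) % b
/-- The second-coordinate map of a dyadic NUT net whose diagonal entries are all `1`:
`ν(n) = Σ_{i=1}^m ((e_i + c_{i,i+1}e_{i+1} + ⋯ + c_{i,m}e_m) mod 2)/2^i`. -/
noncomputable def nutMap2 (m : ℕ) (c : ℕ → ℕ → ℕ) (n : ℕ) : ℝ :=
  ∑ i ∈ Finset.Icc 1 m,
    (((nthDigit 2 n i + ∑ j ∈ Finset.Icc (i + 1) m, c i j * nthDigit 2 n j) % 2 : ℕ) : ℝ)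
      / (2 : ℝ) ^ i

/-- `32` times the value of the `5`-bit NUT map, where the strictly-upper-triangular
matrix entries are encoded in the bits of `k`. -/
def W32 (k n : ℕ) : ℕ :=
  (n % 2 + (k % 2 * (n / 2 % 2) + (k / 2 % 2 * (n / 4 % 2) + (k / 4 % 2 * (n / 8 % 2) +
      k / 8 % 2 * (n / 16 % 2))))) % 2 * 16 +
  (n / 2 % 2 + (k / 16 % 2 * (n / 4 % 2) + (k / 32 % 2 * (n / 8 % 2) +
      k / 64 % 2 * (n / 16 % 2)))) % 2 * 8 +
  (n / 4 % 2 + (k / 128 % 2 * (n / 8 % 2) + k / 256 % 2 * (n / 16 % 2))) % 2 * 4 +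
  (n / 8 % 2 + k / 512 % 2 * (n / 16 % 2)) % 2 * 2 +
  n / 16 % 2 % 2

/-- Encoding of the 10 relevant matrix entries into one natural number. -/
def encNut (c : ℕ → ℕ → ℕ) : ℕ :=
  c 1 2 + 2 * c 1 3 + 4 * c 1 4 + 8 * c 1 5 + 16 * c 2 3 + 32 * c 2 4 + 64 * c 2 5 +
    128 * c 3 4 + 256 * c 3 5 + 512 * c 4 5

/-- A list of candidate boxes `(a₁, b₁, a₂, b₂)` (in units of `1/32`). -/
def boxList : List (ℕ × ℕ × ℕ × ℕ) :=
  [(1, 21, 14, 18), (1, 28, 14, 17), (1, 28, 15, 18), (1, 11, 12, 20), (10, 22, 10, 17),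
   (10, 30, 11, 15), (10, 22, 2, 9), (10, 30, 3, 7), (2, 22, 6, 10), (2, 22, 22, 26),
   (10, 30, 19, 23), (10, 22, 18, 25)]

/-- The box `B` contains no point `(n, W32 k n)` strictly inside. -/
def validBox (k : ℕ) (B : ℕ × ℕ × ℕ × ℕ) : Bool :=
  (List.range 32).all fun n =>
    decide (¬ (B.1 < n ∧ n < B.2.1 ∧ B.2.2.1 < W32 k n ∧ W32 k n < B.2.2.2))

set_option maxRecDepth 100000 in
set_option maxHeartbeats 4000000 in
lemma exists_box : ∀ k < 1024, ∃ B ∈ boxList, validBox k B = true := by decide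

lemma boxList_bounds : ∀ B ∈ boxList,
    B.1 ≤ B.2.1 ∧ B.2.1 ≤ 32 ∧ B.2.2.1 ≤ B.2.2.2 ∧ B.2.2.2 ≤ 32 ∧
    80 ≤ (B.2.1 - B.1) * (B.2.2.2 - B.2.2.1) ∧ 3 ≤ B.2.1 - B.1 ∧ 3 ≤ B.2.2.2 - B.2.2.1 := by
  decide

lemma validBox_spec {k a1 b1 a2 b2 : ℕ} (h : validBox k (a1, b1, a2, b2) = true) :
    ∀ n < 32, ¬ (a1 < n ∧ n < b1 ∧ a2 < W32 k n ∧ W32 k n < b2) := by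
  intro n hn
  have := List.all_eq_true.mp h n (List.mem_range.mpr hn)
  exact of_decide_eq_true this

lemma nutMap2_eq_W32 (m : ℕ) (hm : 5 ≤ m) (c : ℕ → ℕ → ℕ) (hc : ∀ i j, c i j < 2)
    (n : ℕ) (hn : n < 32) :
    nutMap2 m c n = (W32 (encNut c) n : ℝ) / 32 := by
  have hdig : ∀ j, 6 ≤ j → nthDigit 2 n j = 0 := by
    intro j hj
    have h32 : n / 2 ^ (j - 1) = 0 := Nat.div_eq_of_lt (lt_of_lt_of_le hn (by
      calc (32:ℕ) = 2 ^ 5 := by norm_num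
        _ ≤ 2 ^ (j - 1) := Nat.pow_le_pow_right (by norm_num) (by omega)))
    have : j ≠ 0 := by omega
    simp [nthDigit, this, h32]
  have hinner : ∀ i, ∑ j ∈ Finset.Icc (i + 1) m, c i j * nthDigit 2 n j
      = ∑ j ∈ Finset.Icc (i + 1) 5, c i j * nthDigit 2 n j := by
    intro i
    refine (Finset.sum_subset (Finset.Icc_subset_Icc_right hm) ?_).symm
    intro j hj hj'
    have hj6 : 6 ≤ j := by
      simp only [Finset.mem_Icc] at hj hj'; omega
    rw [hdig j hj6, mul_zero]
  have houter : nutMap2 m c n = ∑ i ∈ Finset.Icc 1 5,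
      (((nthDigit 2 n i + ∑ j ∈ Finset.Icc (i + 1) m, c i j * nthDigit 2 n j) % 2 : ℕ) : ℝ)
        / (2 : ℝ) ^ i := by
    rw [nutMap2]
    refine (Finset.sum_subset (Finset.Icc_subset_Icc_right hm) ?_).symm
    intro i hi hi'
    have hi6 : 6 ≤ i := by simp only [Finset.mem_Icc] at hi hi'; omega
    have h2 : ∑ j ∈ Finset.Icc (i + 1) m, c i j * nthDigit 2 n j = 0 :=
      Finset.sum_eq_zero (fun j hj => by
        have : 6 ≤ j := by simp only [Finset.mem_Icc] at hj; omega
        rw [hdig j this, mul_zero])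
    rw [hdig i hi6, h2]
    norm_num
  rw [houter]
  simp only [hinner]
  have d1 : nthDigit 2 n 1 = n % 2 := by simp [nthDigit]
  have d2 : nthDigit 2 n 2 = n / 2 % 2 := by simp [nthDigit]
  have d3 : nthDigit 2 n 3 = n / 4 % 2 := by norm_num [nthDigit]
  have d4 : nthDigit 2 n 4 = n / 8 % 2 := by norm_num [nthDigit]
  have d5 : nthDigit 2 n 5 = n / 16 % 2 := by norm_num [nthDigit]
  rw [show Finset.Icc 1 5 = {1, 2, 3, 4, 5} from by decide]
  rw [Finset.sum_insert (by decide), Finset.sum_insert (by decide),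
    Finset.sum_insert (by decide), Finset.sum_insert (by decide), Finset.sum_singleton]
  norm_num only
  rw [show Finset.Icc 2 5 = {2, 3, 4, 5} from by decide,
    show Finset.Icc 3 5 = {3, 4, 5} from by decide,
    show Finset.Icc 4 5 = {4, 5} from by decide,
    show Finset.Icc 5 5 = {5} from by decide,
    show Finset.Icc 6 5 = (∅ : Finset ℕ) from by decide]
  rw [Finset.sum_insert (by decide), Finset.sum_insert (by decide),
    Finset.sum_insert (by decide), Finset.sum_singleton]
  rw [Finset.sum_insert (by decide), Finset.sum_insert (by decide), Finset.sum_singleton]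
  rw [Finset.sum_insert (by decide), Finset.sum_singleton]
  rw [Finset.sum_singleton, Finset.sum_empty]
  rw [d1, d2, d3, d4, d5]
  have e12 : encNut c % 2 = c 1 2 := by
    have := hc 1 2; have := hc 1 3; have := hc 1 4; have := hc 1 5; have := hc 2 3
    have := hc 2 4; have := hc 2 5; have := hc 3 4; have := hc 3 5; have := hc 4 5
    simp only [encNut]; omega
  have e13 : encNut c / 2 % 2 = c 1 3 := by
    have := hc 1 2; have := hc 1 3; have := hc 1 4; have := hc 1 5; have := hc 2 3
    have := hc 2 4; have := hc 2 5; have := hc 3 4; have := hc 3 5; have := hc 4 5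
    simp only [encNut]; omega
  have e14 : encNut c / 4 % 2 = c 1 4 := by
    have := hc 1 2; have := hc 1 3; have := hc 1 4; have := hc 1 5; have := hc 2 3
    have := hc 2 4; have := hc 2 5; have := hc 3 4; have := hc 3 5; have := hc 4 5
    simp only [encNut]; omega
  have e15 : encNut c / 8 % 2 = c 1 5 := by
    have := hc 1 2; have := hc 1 3; have := hc 1 4; have := hc 1 5; have := hc 2 3
    have := hc 2 4; have := hc 2 5; have := hc 3 4; have := hc 3 5; have := hc 4 5
    simp only [encNut]; omega
  have e23 : encNut c / 16 % 2 = c 2 3 := by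
    have := hc 1 2; have := hc 1 3; have := hc 1 4; have := hc 1 5; have := hc 2 3
    have := hc 2 4; have := hc 2 5; have := hc 3 4; have := hc 3 5; have := hc 4 5
    simp only [encNut]; omega
  have e24 : encNut c / 32 % 2 = c 2 4 := by
    have := hc 1 2; have := hc 1 3; have := hc 1 4; have := hc 1 5; have := hc 2 3
    have := hc 2 4; have := hc 2 5; have := hc 3 4; have := hc 3 5; have := hc 4 5
    simp only [encNut]; omega
  have e25 : encNut c / 64 % 2 = c 2 5 := by
    have := hc 1 2; have := hc 1 3; have := hc 1 4; have := hc 1 5; have := hc 2 3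
    have := hc 2 4; have := hc 2 5; have := hc 3 4; have := hc 3 5; have := hc 4 5
    simp only [encNut]; omega
  have e34 : encNut c / 128 % 2 = c 3 4 := by
    have := hc 1 2; have := hc 1 3; have := hc 1 4; have := hc 1 5; have := hc 2 3
    have := hc 2 4; have := hc 2 5; have := hc 3 4; have := hc 3 5; have := hc 4 5
    simp only [encNut]; omega
  have e35 : encNut c / 256 % 2 = c 3 5 := by
    have := hc 1 2; have := hc 1 3; have := hc 1 4; have := hc 1 5; have := hc 2 3
    have := hc 2 4; have := hc 2 5; have := hc 3 4; have := hc 3 5; have := hc 4 5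
    simp only [encNut]; omega
  have e45 : encNut c / 512 % 2 = c 4 5 := by
    have := hc 1 2; have := hc 1 3; have := hc 1 4; have := hc 1 5; have := hc 2 3
    have := hc 2 4; have := hc 2 5; have := hc 3 4; have := hc 3 5; have := hc 4 5
    simp only [encNut]; omega
  rw [W32, e12, e13, e14, e15, e23, e24, e25, e34, e35, e45]
  simp only [add_zero]
  push_cast
  ring

set_option maxHeartbeats 1000000 in
/-- Lower bound for the dispersion of dyadic NUT nets with `m ≥ 5`:
`disp(P) ≥ (5/2)·(1/2^m)`; concretely there is an axis-parallel box of area at least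
`(5/2)·(1/2^m)` in `[0,1]²` containing no point of `P`. -/
theorem disp_dyadic_NUT_ge (m : ℕ) (hm : 5 ≤ m) (c : ℕ → ℕ → ℕ)
    (hc : ∀ i j, c i j < 2)
    (P : Set (ℝ × ℝ))
    (hP : P = {p : ℝ × ℝ | ∃ n : ℕ, n < 2 ^ m ∧ p = ((n : ℝ) / (2 : ℝ) ^ m, nutMap2 m c n)}) :
    disp P ≥ 5 / 2 * (1 / (2 : ℝ) ^ m) ∧
    ∃ x₁ y₁ x₂ y₂ : ℝ, 0 ≤ x₁ ∧ x₁ ≤ y₁ ∧ y₁ ≤ 1 ∧ 0 ≤ x₂ ∧ x₂ ≤ y₂ ∧ y₂ ≤ 1 ∧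
      5 / 2 * (1 / (2 : ℝ) ^ m) ≤ (y₁ - x₁) * (y₂ - x₂) ∧
      ∀ p ∈ P, p ∉ Set.Ioo x₁ y₁ ×ˢ Set.Ioo x₂ y₂ := by
  have hk : encNut c < 1024 := by
    have := hc 1 2; have := hc 1 3; have := hc 1 4; have := hc 1 5; have := hc 2 3
    have := hc 2 4; have := hc 2 5; have := hc 3 4; have := hc 3 5; have := hc 4 5
    simp only [encNut]; omega
  obtain ⟨B, hBmem, hBvalid⟩ := exists_box (encNut c) hk
  obtain ⟨a1, b1, a2, b2⟩ := B
  obtain ⟨hab1, hb1, hab2, hb2, harea, hw1, hw2⟩ := boxList_bounds _ hBmem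
  simp only at hab1 hb1 hab2 hb2 harea hw1 hw2
  have h2m : (0:ℝ) < 2 ^ m := by positivity
  have h2m32 : (32:ℝ) ≤ 2 ^ m := by
    calc (32:ℝ) = 2 ^ 5 := by norm_num
      _ ≤ 2 ^ m := by
        apply pow_le_pow_right₀ (by norm_num) hm
  -- central emptiness fact (strict inequalities)
  have hempty : ∀ n : ℕ, n < 2 ^ m →
      ¬ ((a1:ℝ)/2^m < (n:ℝ)/2^m ∧ (n:ℝ)/2^m < (b1:ℝ)/2^m ∧
         (a2:ℝ)/32 < nutMap2 m c n ∧ nutMap2 m c n < (b2:ℝ)/32) := by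
    rintro n hn ⟨h1, h2, h3, h4⟩
    have hn1 : a1 < n := by
      have := (div_lt_div_iff_of_pos_right h2m).mp h1
      exact_mod_cast this
    have hn2 : n < b1 := by
      have := (div_lt_div_iff_of_pos_right h2m).mp h2
      exact_mod_cast this
    have hn32 : n < 32 := lt_of_lt_of_le hn2 hb1
    rw [nutMap2_eq_W32 m hm c hc n hn32] at h3 h4
    have h32 : (0:ℝ) < 32 := by norm_num
    have ha2 : a2 < W32 (encNut c) n := by
      have := (div_lt_div_iff_of_pos_right h32).mp h3
      exact_mod_cast this
    have hb2' : W32 (encNut c) n < b2 := by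
      have := (div_lt_div_iff_of_pos_right h32).mp h4
      exact_mod_cast this
    exact validBox_spec hBvalid n hn32 ⟨hn1, hn2, ha2, hb2'⟩
  -- real widths
  set W1 : ℝ := (b1:ℝ)/2^m - (a1:ℝ)/2^m with hW1def
  set W2 : ℝ := (b2:ℝ)/32 - (a2:ℝ)/32 with hW2def
  have hcast1 : ((b1 - a1 : ℕ) : ℝ) = (b1:ℝ) - a1 := by
    push_cast [Nat.cast_sub hab1]; ring
  have hcast2 : ((b2 - a2 : ℕ) : ℝ) = (b2:ℝ) - a2 := by
    push_cast [Nat.cast_sub hab2]; ring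
  have h3a : (3:ℝ) ≤ (b1:ℝ) - a1 := by
    rw [← hcast1]; exact_mod_cast hw1
  have h3b : (3:ℝ) ≤ (b2:ℝ) - a2 := by
    rw [← hcast2]; exact_mod_cast hw2
  have hW1pos : (0:ℝ) < W1 := by
    rw [hW1def, div_sub_div_same]
    exact div_pos (by linarith) h2m
  have hW2pos : (0:ℝ) < W2 := by
    rw [hW2def, div_sub_div_same]
    exact div_pos (by linarith) (by norm_num)
  have hW1le : W1 ≤ 1 := by
    rw [hW1def]
    have ha1nn : (0:ℝ) ≤ (a1:ℝ)/2^m := by positivity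
    have : (b1:ℝ)/2^m ≤ 1 := by
      rw [div_le_one h2m]
      calc (b1:ℝ) ≤ 32 := by exact_mod_cast hb1
        _ ≤ 2 ^ m := h2m32
    linarith
  have hW2le : W2 ≤ 1 := by
    rw [hW2def]
    have ha2nn : (0:ℝ) ≤ (a2:ℝ)/32 := by positivity
    have : (b2:ℝ)/32 ≤ 1 := by
      rw [div_le_one (by norm_num)]
      exact_mod_cast hb2
    linarith
  have h80 : (80:ℝ) ≤ ((b1:ℝ) - a1) * ((b2:ℝ) - a2) := by
    rw [← hcast1, ← hcast2]
    exact_mod_cast harea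
  have hT : 5 / 2 * (1 / (2:ℝ) ^ m) ≤ W1 * W2 := by
    rw [hW1def, hW2def, div_sub_div_same, div_sub_div_same, div_mul_div_comm,
      div_mul_div_comm, div_le_div_iff₀ (by positivity) (by positivity)]
    nlinarith [mul_le_mul_of_nonneg_right h80 h2m.le]
  have hboundsx : (0:ℝ) ≤ (a1:ℝ)/2^m ∧ (a1:ℝ)/2^m ≤ (b1:ℝ)/2^m ∧ (b1:ℝ)/2^m ≤ 1 := by
    refine ⟨by positivity, ?_, ?_⟩
    · exact (div_le_div_iff_of_pos_right h2m).mpr (by exact_mod_cast hab1)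
    · rw [div_le_one h2m]
      calc (b1:ℝ) ≤ 32 := by exact_mod_cast hb1
        _ ≤ 2 ^ m := h2m32
  have hboundsy : (0:ℝ) ≤ (a2:ℝ)/32 ∧ (a2:ℝ)/32 ≤ (b2:ℝ)/32 ∧ (b2:ℝ)/32 ≤ 1 := by
    refine ⟨by positivity, ?_, ?_⟩
    · exact (div_le_div_iff_of_pos_right (by norm_num : (0:ℝ) < 32)).mpr
        (by exact_mod_cast hab2)
    · rw [div_le_one (by norm_num)]
      exact_mod_cast hb2
  constructor
  · -- dispersion lower bound
    have hbdd : BddAbove (emptyBoxAreas P) := by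
      refine ⟨1, ?_⟩
      rintro A ⟨x1, y1, x2, y2, h0, h1, h2, h3, h4, h5, -, rfl⟩
      nlinarith
    have hne : (emptyBoxAreas P).Nonempty := by
      refine ⟨0, 0, 0, 0, 0, le_refl _, le_refl _, by norm_num, le_refl _, le_refl _,
        by norm_num, ?_, by ring⟩
      intro p _ hp
      simp [Set.Ico_self] at hp
    rw [ge_iff_le, disp, Real.le_sSup_iff hbdd hne]
    intro ε hε
    set δ : ℝ := min (min W1 W2) (-ε/4) with hδdef
    have hδpos : 0 < δ := lt_min (lt_min hW1pos hW2pos) (by linarith)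
    have hδW1 : δ ≤ W1 := le_trans (min_le_left _ _) (min_le_left _ _)
    have hδW2 : δ ≤ W2 := le_trans (min_le_left _ _) (min_le_right _ _)
    have hδε : δ ≤ -ε/4 := min_le_right _ _
    refine ⟨(W1 - δ) * (W2 - δ), ⟨(a1:ℝ)/2^m + δ, (b1:ℝ)/2^m, (a2:ℝ)/32 + δ, (b2:ℝ)/32,
      ?_, ?_, hboundsx.2.2, ?_, ?_, hboundsy.2.2, ?_, by rw [hW1def, hW2def]; ring⟩, ?_⟩
    · have := hboundsx.1; linarith
    · rw [hW1def] at hδW1; linarith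
    · have := hboundsy.1; linarith
    · rw [hW2def] at hδW2; linarith
    · -- emptiness for the half-open box
      intro p hp hmem
      rw [hP] at hp
      obtain ⟨n, hn, rfl⟩ := hp
      obtain ⟨hx, hy⟩ := hmem
      simp only [Set.mem_Ico] at hx hy
      exact hempty n hn ⟨by linarith [hx.1], hx.2, by linarith [hy.1], hy.2⟩
    · -- area close to W1 * W2
      nlinarith [mul_nonneg (le_of_lt hδpos) (sub_nonneg.mpr hW2le),
        mul_nonneg (le_of_lt hδpos) (sub_nonneg.mpr hW1le), sq_nonneg δ, mul_pos hδpos hδpos]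
  · -- explicit open box
    refine ⟨(a1:ℝ)/2^m, (b1:ℝ)/2^m, (a2:ℝ)/32, (b2:ℝ)/32,
      hboundsx.1, hboundsx.2.1, hboundsx.2.2, hboundsy.1, hboundsy.2.1, hboundsy.2.2, ?_, ?_⟩
    · calc 5 / 2 * (1 / (2:ℝ) ^ m) ≤ W1 * W2 := hT
        _ = ((b1:ℝ)/2^m - (a1:ℝ)/2^m) * ((b2:ℝ)/32 - (a2:ℝ)/32) := by rw [hW1def, hW2def]
    · intro p hp hmem
      rw [hP] at hp
      obtain ⟨n, hn, rfl⟩ := hp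
      obtain ⟨hx, hy⟩ := hmem
      simp only [Set.mem_Ioo] at hx hy
      exact hempty n hn ⟨hx.1, hx.2, hy.1, hy.2⟩
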